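/- arXiv:2101.10720 — 3 statements merged into one kernel-verified Lean document; each statement's English description precedes it below -/
import Mathlib

section
/- In the ν-calculus, if a term M contains no occurrence of the name r, and the configuration (G, M) with r ∈ G evaluates to a value V, then r does not occur in V. -/
/-! Types of the ν-calculus: Unit, Bool, the name type Nm, products and arrows. -/
inductive Ty : Type
  | unit : Ty
  | bool : Ty
  | nm : Ty
  | prod : Ty → Ty → Ty
  | arrow : Ty → Ty → Ty
  deriving DecidableEq

/-! Terms of the ν-calculus, with named variables (names and variables are ℕ). -/
inductive Tm : Type
  | var : ℕ → Tm
  | unit : Tm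
  | tt : Tm
  | ff : Tm
  | name : ℕ → Tm
  | gensym : Tm
  | lam : ℕ → Ty → Tm → Tm
  | app : Tm → Tm → Tm
  | pair : Tm → Tm → Tm
  | fst : Tm → Tm
  | snd : Tm → Tm
  | cond : Tm → Tm → Tm → Tm
  | letin : ℕ → Tm → Tm → Tm
  | eq : Tm → Tm → Tm
  deriving DecidableEq

/-- The finite set of name constants occurring in a term. -/
def AN : Tm → Finset ℕ
  | .name r => {r}
  | .lam _ _ M => AN M
  | .app M N => AN M ∪ AN N
  | .pair M N => AN M ∪ AN N
  | .fst M => AN M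
  | .snd M => AN M
  | .cond M N₁ N₂ => AN M ∪ AN N₁ ∪ AN N₂
  | .letin _ M N => AN M ∪ AN N
  | .eq M N => AN M ∪ AN N
  | _ => ∅

/-- Free variables of a term. -/
def FV : Tm → Finset ℕ
  | .var x => {x}
  | .lam x _ M => FV M \ {x}
  | .app M N => FV M ∪ FV N
  | .pair M N => FV M ∪ FV N
  | .fst M => FV M
  | .snd M => FV M
  | .cond M N₁ N₂ => FV M ∪ FV N₁ ∪ FV N₂
  | .letin x M N => FV M ∪ (FV N \ {x})
  | .eq M N => FV M ∪ FV N
  | _ => ∅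

/-- Substitution of a closed term `V` for the variable `x` (no capture since `V` is closed). -/
def subst (x : ℕ) (V : Tm) : Tm → Tm
  | .var y => if y = x then V else .var y
  | .lam y α M => if y = x then .lam y α M else .lam y α (subst x V M)
  | .app M N => .app (subst x V M) (subst x V N)
  | .pair M N => .pair (subst x V M) (subst x V N)
  | .fst M => .fst (subst x V M)
  | .snd M => .snd (subst x V M)
  | .cond M N₁ N₂ => .cond (subst x V M) (subst x V N₁) (subst x V N₂)
  | .letin y M N => .letin y (subst x V M) (if y = x then N else subst x V N)
  | .eq M N => .eq (subst x V M) (subst x V N)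
  | t => t

/-- Values. -/
inductive IsValue : Tm → Prop
  | var : ∀ x, IsValue (.var x)
  | unit : IsValue .unit
  | tt : IsValue .tt
  | ff : IsValue .ff
  | name : ∀ r, IsValue (.name r)
  | gensym : IsValue .gensym
  | lam : ∀ x α M, IsValue (.lam x α M)
  | pair : ∀ {V W}, IsValue V → IsValue W → IsValue (.pair V W)

/-- Typing contexts: ordered lists of variable/type pairs, later entries more recent. -/
abbrev Ctx := List (ℕ × Ty)

/-- Look up the most recent binding of `x` in `Γ`. -/
def lookupVar (Γ : Ctx) (x : ℕ) : Option Ty :=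
  (Γ.reverse.find? (fun p => p.1 == x)).map Prod.snd

/-- Typing judgement `Γ ⊢ M : α` of the ν-calculus. -/
inductive Typed : Ctx → Tm → Ty → Prop
  | var : ∀ {Γ x α}, lookupVar Γ x = some α → Typed Γ (.var x) α
  | unit : ∀ {Γ}, Typed Γ .unit .unit
  | tt : ∀ {Γ}, Typed Γ .tt .bool
  | ff : ∀ {Γ}, Typed Γ .ff .bool
  | name : ∀ {Γ} (r : ℕ), Typed Γ (.name r) .nm
  | gensym : ∀ {Γ}, Typed Γ .gensym (.arrow .unit .nm)
  | lam : ∀ {Γ x α β M}, Typed (Γ ++ [(x, α)]) M β → Typed Γ (.lam x α M) (.arrow α β)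
  | app : ∀ {Γ M N α β}, Typed Γ M (.arrow α β) → Typed Γ N α → Typed Γ (.app M N) β
  | pair : ∀ {Γ M N α β}, Typed Γ M α → Typed Γ N β → Typed Γ (.pair M N) (.prod α β)
  | fst : ∀ {Γ M α β}, Typed Γ M (.prod α β) → Typed Γ (.fst M) α
  | snd : ∀ {Γ M α β}, Typed Γ M (.prod α β) → Typed Γ (.snd M) β
  | cond : ∀ {Γ M N₁ N₂ α}, Typed Γ M .bool → Typed Γ N₁ α → Typed Γ N₂ α →
      Typed Γ (.cond M N₁ N₂) α
  | letin : ∀ {Γ x M N α β}, Typed Γ M α → Typed (Γ ++ [(x, α)]) N β →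
      Typed Γ (.letin x M N) β
  | eqNm : ∀ {Γ M N}, Typed Γ M .nm → Typed Γ N .nm → Typed Γ (.eq M N) .bool
  | eqBool : ∀ {Γ M N}, Typed Γ M .bool → Typed Γ N .bool → Typed Γ (.eq M N) .bool

/-- Big-step call-by-value evaluation on configurations `(G, M) ⇓ (G', V)` where `G`
is the set of names generated so far. -/
inductive Eval : Finset ℕ → Tm → Finset ℕ → Tm → Prop
  | val : ∀ {G V}, IsValue V → Eval G V G V
  | app : ∀ {G G₁ G₂ G₃ M N B V W x α},
      Eval G M G₁ (.lam x α B) → Eval G₁ N G₂ W → IsValue W →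
      Eval G₂ (subst x W B) G₃ V → Eval G (.app M N) G₃ V
  | gensym : ∀ {G G₁ G₂ M N} (r : ℕ),
      Eval G M G₁ .gensym → Eval G₁ N G₂ .unit → r ∉ G₂ →
      Eval G (.app M N) (insert r G₂) (.name r)
  | pair : ∀ {G G₁ G₂ M N V W},
      Eval G M G₁ V → Eval G₁ N G₂ W → Eval G (.pair M N) G₂ (.pair V W)
  | fst : ∀ {G G₁ M V W}, Eval G M G₁ (.pair V W) → Eval G (.fst M) G₁ V
  | snd : ∀ {G G₁ M V W}, Eval G M G₁ (.pair V W) → Eval G (.snd M) G₁ W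
  | condT : ∀ {G G₁ G₂ M N₁ N₂ V},
      Eval G M G₁ .tt → Eval G₁ N₁ G₂ V → Eval G (.cond M N₁ N₂) G₂ V
  | condF : ∀ {G G₁ G₂ M N₁ N₂ V},
      Eval G M G₁ .ff → Eval G₁ N₂ G₂ V → Eval G (.cond M N₁ N₂) G₂ V
  | letin : ∀ {G G₁ G₂ M N W V x},
      Eval G M G₁ W → IsValue W → Eval G₁ (subst x W N) G₂ V →
      Eval G (.letin x M N) G₂ V
  | eqT : ∀ {G G₁ G₂ M N r},
      Eval G M G₁ (.name r) → Eval G₁ N G₂ (.name r) → Eval G (.eq M N) G₂ .tt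
  | eqF : ∀ {G G₁ G₂ M N r s},
      Eval G M G₁ (.name r) → Eval G₁ N G₂ (.name s) → r ≠ s →
      Eval G (.eq M N) G₂ .ff
  | eqBoolT : ∀ {G G₁ G₂ M N b},
      Eval G M G₁ b → Eval G₁ N G₂ b → (b = Tm.tt ∨ b = Tm.ff) →
      Eval G (.eq M N) G₂ .tt
  | eqBoolF : ∀ {G G₁ G₂ M N b₁ b₂},
      Eval G M G₁ b₁ → Eval G₁ N G₂ b₂ →
      ((b₁ = Tm.tt ∧ b₂ = Tm.ff) ∨ (b₁ = Tm.ff ∧ b₂ = Tm.tt)) →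
      Eval G (.eq M N) G₂ .ff

/-- Types not mentioning the name type `Nm`. -/
def NmFreeTy : Ty → Prop
  | .nm => False
  | .prod a b => NmFreeTy a ∧ NmFreeTy b
  | .arrow a b => NmFreeTy a ∧ NmFreeTy b
  | _ => True

/-- Base types β ::= Unit | Bool | β × β. -/
inductive BaseTy : Ty → Prop
  | unit : BaseTy .unit
  | bool : BaseTy .bool
  | prod : ∀ {a b}, BaseTy a → BaseTy b → BaseTy (.prod a b)

/-- Terms with no occurrence of `gensym`. -/
def NoGensym : Tm → Prop
  | .gensym => False
  | .lam _ _ M => NoGensym M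
  | .app M N => NoGensym M ∧ NoGensym N
  | .pair M N => NoGensym M ∧ NoGensym N
  | .fst M => NoGensym M
  | .snd M => NoGensym M
  | .cond M N₁ N₂ => NoGensym M ∧ NoGensym N₁ ∧ NoGensym N₂
  | .letin _ M N => NoGensym M ∧ NoGensym N
  | .eq M N => NoGensym M ∧ NoGensym N
  | _ => True

/-- Logical expressions: variables, constants, pairing and projections. -/
def IsExpr : Tm → Prop
  | .var _ => True
  | .unit => True
  | .tt => True
  | .ff => True
  | .pair e e' => IsExpr e ∧ IsExpr e'
  | .fst e => IsExpr e
  | .snd e => IsExpr e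
  | _ => False

def boolVal : Bool → Tm
  | true => .tt
  | false => .ff

/-- Contextual equivalence of closed terms `M, N` of type `α` with names in `G`:
every boolean-valued closing context (a term with one free variable, the hole)
with names in `G` evaluates `M` and `N` to the same boolean. -/
def CtxEquiv (G : Finset ℕ) (α : Ty) (M N : Tm) : Prop :=
  ∀ (h : ℕ) (C : Tm) (b : Bool), Typed [(h, α)] C .bool → AN C ⊆ G →
    ((∃ G', Eval G (subst h M C) G' (boolVal b)) ↔
     (∃ G', Eval G (subst h N C) G' (boolVal b)))

/-- Models: finite maps from variables to closed values, as ordered lists. -/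
abbrev Model := List (ℕ × Tm)

/-- All names occurring in a model. -/
def ANModel (ξ : Model) : Finset ℕ := ξ.foldr (fun p s => AN p.2 ∪ s) ∅

/-- Closure of a term by a model: substitute each binding. -/
def msubst (ξ : Model) (M : Tm) : Tm := ξ.foldl (fun N p => subst p.1 p.2 N) M

/-- Look up the value of `x` in the model `ξ`. -/
def modelLookup (ξ : Model) (x : ℕ) : Option Tm :=
  (ξ.reverse.find? (fun p => p.1 == x)).map Prod.snd

/-- A model is typed by a context when it binds the same variables, in order,
to closed values of the corresponding types. -/
inductive ModelTyped : Ctx → Model → Prop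
  | nil : ModelTyped [] []
  | cons : ∀ {Γ ξ x α V}, IsValue V → Typed [] V α → ModelTyped Γ ξ →
      ModelTyped ((x, α) :: Γ) ((x, V) :: ξ)

/-- Single-step model extension: add one binding `y : V` where `V` is derived
from the current model by a name-free term. -/
def ModelExt1 (p q : Ctx × Model) : Prop :=
  ∃ (y : ℕ) (α : Ty) (M V : Tm) (G' : Finset ℕ),
    q.1 = p.1 ++ [(y, α)] ∧ q.2 = p.2 ++ [(y, V)] ∧
    AN M = ∅ ∧ Typed p.1 M α ∧ IsValue V ∧
    Eval (ANModel p.2) (msubst p.2 M) G' V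

/-- Model extension `ξ ⪯* ξ′`: reflexive-transitive closure of single steps. -/
def ModelExt : Ctx × Model → Ctx × Model → Prop := Relation.ReflTransGen ModelExt1

lemma eval_mono : ∀ {G G' : Finset ℕ} {M V : Tm}, Eval G M G' V → G ⊆ G' := by
  intro G G' M V h
  induction h with
  | val _ => exact subset_rfl
  | app _ _ _ _ ih1 ih2 ih3 => exact ih1.trans (ih2.trans ih3)
  | gensym r _ _ _ ih1 ih2 =>
      exact (ih1.trans ih2).trans (Finset.subset_insert _ _)
  | pair _ _ ih1 ih2 => exact ih1.trans ih2
  | fst _ ih => exact ih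
  | snd _ ih => exact ih
  | condT _ _ ih1 ih2 => exact ih1.trans ih2
  | condF _ _ ih1 ih2 => exact ih1.trans ih2
  | letin _ _ _ ih1 ih2 => exact ih1.trans ih2
  | eqT _ _ ih1 ih2 => exact ih1.trans ih2
  | eqF _ _ _ ih1 ih2 => exact ih1.trans ih2
  | eqBoolT _ _ _ ih1 ih2 => exact ih1.trans ih2
  | eqBoolF _ _ _ ih1 ih2 => exact ih1.trans ih2

lemma AN_subst (x : ℕ) (W : Tm) : ∀ B, AN (subst x W B) ⊆ AN B ∪ AN W := by
  intro B
  induction B with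
  | var y =>
      simp only [subst]
      split <;> simp [AN]
  | lam y α M ih =>
      simp only [subst]
      split
      · simp [AN]
      · simpa [AN] using ih
  | app M N ih1 ih2 =>
      simp only [subst, AN]
      intro a ha
      rcases Finset.mem_union.1 ha with h | h
      · rcases Finset.mem_union.1 (ih1 h) with h | h <;> simp [h]
      · rcases Finset.mem_union.1 (ih2 h) with h | h <;> simp [h]
  | pair M N ih1 ih2 =>
      simp only [subst, AN]
      intro a ha
      rcases Finset.mem_union.1 ha with h | h
      · rcases Finset.mem_union.1 (ih1 h) with h | h <;> simp [h]
      · rcases Finset.mem_union.1 (ih2 h) with h | h <;> simp [h]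
  | fst M ih => simpa [AN, subst] using ih
  | snd M ih => simpa [AN, subst] using ih
  | cond M N₁ N₂ ih1 ih2 ih3 =>
      simp only [subst, AN]
      intro a ha
      rcases Finset.mem_union.1 ha with ha | h
      · rcases Finset.mem_union.1 ha with h | h
        · rcases Finset.mem_union.1 (ih1 h) with h | h <;> simp [h]
        · rcases Finset.mem_union.1 (ih2 h) with h | h <;> simp [h]
      · rcases Finset.mem_union.1 (ih3 h) with h | h <;> simp [h]
  | letin y M N ih1 ih2 =>
      simp only [subst, AN]
      intro a ha
      rcases Finset.mem_union.1 ha with h | h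
      · rcases Finset.mem_union.1 (ih1 h) with h | h <;> simp [h]
      · split at h
        · simp [h]
        · rcases Finset.mem_union.1 (ih2 h) with h | h <;> simp [h]
  | eq M N ih1 ih2 =>
      simp only [subst, AN]
      intro a ha
      rcases Finset.mem_union.1 ha with h | h
      · rcases Finset.mem_union.1 (ih1 h) with h | h <;> simp [h]
      · rcases Finset.mem_union.1 (ih2 h) with h | h <;> simp [h]
  | _ => simp [AN, subst]

/-- If `r` does not occur in `M` and `r` is already generated
(`r ∈ G`), then evaluating `M` from `G` yields a value not containing `r`. -/
theorem name_fresh_in_term_implies_fresh_in_value :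
    ∀ (G G' : Finset ℕ) (M V : Tm) (r : ℕ),
      Eval G M G' V → r ∉ AN M → r ∈ G → r ∉ AN V := by
  intro G G' M V r h
  induction h with
  | val _ => intro h1 _; exact h1
  | @app G G₁ G₂ G₃ M N B V W x α h1 h2 hW h3 ih1 ih2 ih3 =>
      intro hM hG
      have hMn : r ∉ AN M := fun h => hM (by simp [AN, h])
      have hNn : r ∉ AN N := fun h => hM (by simp [AN, h])
      have hB := ih1 hMn hG
      have hrG1 : r ∈ G₁ := eval_mono h1 hG
      have hWn := ih2 hNn hrG1
      have hrG2 : r ∈ G₂ := eval_mono h2 hrG1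
      refine ih3 (fun h => ?_) hrG2
      rcases Finset.mem_union.1 (AN_subst x W B h) with h | h
      · exact hB (by simpa [AN] using h)
      · exact hWn h
  | @gensym G G₁ G₂ M N s h1 h2 hs ih1 ih2 =>
      intro hM hG
      have : r ∈ G₂ := eval_mono h2 (eval_mono h1 hG)
      simp only [AN, Finset.mem_singleton]
      rintro rfl; exact hs this
  | @pair G G₁ G₂ M N V W h1 h2 ih1 ih2 =>
      intro hM hG
      have hMn : r ∉ AN M := fun h => hM (by simp [AN, h])
      have hNn : r ∉ AN N := fun h => hM (by simp [AN, h])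
      have h3 := ih1 hMn hG
      have h4 := ih2 hNn (eval_mono h1 hG)
      simp only [AN, Finset.mem_union]
      rintro (h | h)
      · exact h3 h
      · exact h4 h
  | @fst G G₁ M V W h1 ih =>
      intro hM hG
      exact fun h => ih hM hG (by simp [AN, h])
  | @snd G G₁ M V W h1 ih =>
      intro hM hG
      exact fun h => ih hM hG (by simp [AN, h])
  | @condT G G₁ G₂ M N₁ N₂ V h1 h2 ih1 ih2 =>
      intro hM hG
      exact ih2 (fun h => hM (by simp [AN, h])) (eval_mono h1 hG)
  | @condF G G₁ G₂ M N₁ N₂ V h1 h2 ih1 ih2 =>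
      intro hM hG
      exact ih2 (fun h => hM (by simp [AN, h])) (eval_mono h1 hG)
  | @letin G G₁ G₂ M N W V x h1 hW h2 ih1 ih2 =>
      intro hM hG
      have hMn : r ∉ AN M := fun h => hM (by simp [AN, h])
      have hNn : r ∉ AN N := fun h => hM (by simp [AN, h])
      have hWn := ih1 hMn hG
      refine ih2 (fun h => ?_) (eval_mono h1 hG)
      rcases Finset.mem_union.1 (AN_subst x W N h) with h | h
      · exact hNn h
      · exact hWn h
  | eqT _ _ _ _ => intro _ _; simp [AN]
  | eqF _ _ _ _ _ => intro _ _; simp [AN]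
  | eqBoolT _ _ _ _ _ => intro _ _; simp [AN]
  | eqBoolF _ _ _ _ _ => intro _ _; simp [AN]
end

section
/- In the ν-calculus, no name-free term applied to a function value of type α → β with β a base type can reveal a name hidden inside that function: if M is a term with no name constants, typed as ⊢ M : Nm in the context f : α → β where β is a base type (Unit, Bool, or products thereof), V is a closed value of type α → β, and the name r occurs in V but not in M, then the substituted term M[V/f] does not evaluate to r. -/
/-! ### Auxiliary lemmas -/

lemma lookupVar_nil (y : ℕ) : lookupVar [] y = none := rfl

lemma lookupVar_append (Γ : Ctx) (x : ℕ) (α : Ty) (y : ℕ) :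
    lookupVar (Γ ++ [(x, α)]) y = if y = x then some α else lookupVar Γ y := by
  simp only [lookupVar, List.reverse_append, List.reverse_singleton, List.singleton_append,
    List.find?_cons]
  by_cases h : y = x
  · subst h; simp
  · have : ((x, α).1 == y) = false := by simp [Ne.symm h]
    simp [this, h]

def envLookup (ξ : Model) (x : ℕ) : Option Tm :=
  (ξ.find? (fun p => p.1 == x)).map Prod.snd

lemma envLookup_nil (y : ℕ) : envLookup [] y = none := rfl

lemma envLookup_cons (p : ℕ × Tm) (ξ : Model) (y : ℕ) :
    envLookup (p :: ξ) y = if p.1 = y then some p.2 else envLookup ξ y := by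
  by_cases h : p.1 = y
  · simp [envLookup, List.find?_cons, h]
  · have : (p.1 == y) = false := by simp [h]
    simp [envLookup, List.find?_cons, this, h]

lemma envLookup_filter_append (ξ : Model) (x : ℕ) (U : Tm) (y : ℕ) :
    envLookup (ξ.filter (fun p => !(p.1 == x)) ++ [(x, U)]) y =
      if y = x then some U else envLookup ξ y := by
  induction ξ with
  | nil =>
    by_cases h : y = x
    · simp [h, envLookup_cons]
    · simp [envLookup_cons, Ne.symm h, h, envLookup_nil]
  | cons p ξ ih =>
    by_cases hp : p.1 = x
    · rw [show ((p :: ξ).filter (fun p => !(p.1 == x))) = ξ.filter (fun p => !(p.1 == x)) by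
        simp [List.filter_cons, hp]]
      rw [ih, envLookup_cons]
      by_cases h : y = x
      · simp [h]
      · simp [h, show p.1 = y ↔ False by constructor <;> intro hh <;> simp_all]
    · rw [show ((p :: ξ).filter (fun p => !(p.1 == x))) = p :: ξ.filter (fun p => !(p.1 == x)) by
        simp [List.filter_cons, hp]]
      rw [List.cons_append, envLookup_cons, envLookup_cons, ih]
      by_cases h : p.1 = y
      · have : ¬ (y = x) := by rw [← h]; exact hp
        simp [h, this]
      · simp [h]

/-! Free-variable lemmas -/

lemma subst_not_free {x : ℕ} {t : Tm} (h : x ∉ FV t) (W : Tm) : subst x W t = t := by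
  induction t with
  | var y =>
    have : ¬ (y = x) := by rintro rfl; simp [FV] at h
    simp [subst, this]
  | lam y α M ih =>
    by_cases hyx : y = x
    · simp [subst, hyx]
    · simp only [FV, Finset.mem_sdiff, Finset.mem_singleton] at h
      push_neg at h
      simp [subst, hyx, ih (fun hx => hyx ((h hx).symm))]
  | app M N ihM ihN =>
    simp only [FV, Finset.mem_union] at h; push_neg at h
    simp [subst, ihM h.1, ihN h.2]
  | pair M N ihM ihN =>
    simp only [FV, Finset.mem_union] at h; push_neg at h
    simp [subst, ihM h.1, ihN h.2]
  | fst M ih => simp only [FV] at h; simp [subst, ih h]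
  | snd M ih => simp only [FV] at h; simp [subst, ih h]
  | cond M N₁ N₂ ihM ih₁ ih₂ =>
    simp only [FV, Finset.mem_union] at h; push_neg at h
    simp [subst, ihM h.1.1, ih₁ h.1.2, ih₂ h.2]
  | letin y M N ihM ihN =>
    simp only [FV, Finset.mem_union, Finset.mem_sdiff, Finset.mem_singleton] at h
    push_neg at h
    by_cases hyx : y = x
    · simp [subst, hyx, ihM h.1]
    · simp [subst, hyx, ihM h.1, ihN (fun hx => hyx ((h.2 hx).symm))]
  | eq M N ihM ihN =>
    simp only [FV, Finset.mem_union] at h; push_neg at h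
    simp [subst, ihM h.1, ihN h.2]
  | _ => simp [subst]
lemma FV_subst {W : Tm} (hW : FV W = ∅) (x : ℕ) (t : Tm) :
    FV (subst x W t) = FV t \ {x} := by
  induction t with
  | var z =>
    by_cases h : z = x
    · subst h; simp [subst, FV, hW]
    · have : subst x W (Tm.var z) = Tm.var z := by simp [subst, h]
      rw [this]
      ext u; simp only [FV, Finset.mem_sdiff, Finset.mem_singleton]
      constructor
      · rintro rfl; exact ⟨rfl, h⟩
      · rintro ⟨rfl, _⟩; rfl
  | lam z α M ih =>
    by_cases h : z = x
    · subst h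
      have : subst z W (Tm.lam z α M) = Tm.lam z α M := by simp [subst]
      rw [this]
      ext u; simp only [FV, Finset.mem_sdiff, Finset.mem_singleton]; tauto
    · have : subst x W (Tm.lam z α M) = Tm.lam z α (subst x W M) := by simp [subst, h]
      rw [this]
      ext u; simp only [FV, ih, Finset.mem_sdiff, Finset.mem_singleton]; tauto
  | app M N ihM ihN =>
    show FV (.app _ _) = _
    ext u; simp only [FV, ihM, ihN, Finset.mem_union, Finset.mem_sdiff,
      Finset.mem_singleton]; tauto
  | pair M N ihM ihN =>
    show FV (.pair _ _) = _
    ext u; simp only [FV, ihM, ihN, Finset.mem_union, Finset.mem_sdiff,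
      Finset.mem_singleton]; tauto
  | fst M ih =>
    show FV (.fst _) = _
    ext u; simp only [FV, ih, Finset.mem_sdiff, Finset.mem_singleton]
  | snd M ih =>
    show FV (.snd _) = _
    ext u; simp only [FV, ih, Finset.mem_sdiff, Finset.mem_singleton]
  | cond M N₁ N₂ ihM ih₁ ih₂ =>
    show FV (.cond _ _ _) = _
    ext u; simp only [FV, ihM, ih₁, ih₂, Finset.mem_union, Finset.mem_sdiff,
      Finset.mem_singleton]; tauto
  | letin z M N ihM ihN =>
    by_cases h : z = x
    · subst h
      have : subst z W (Tm.letin z M N) = Tm.letin z (subst z W M) N := by simp [subst]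
      rw [this]
      ext u; simp only [FV, ihM, Finset.mem_union, Finset.mem_sdiff,
        Finset.mem_singleton]; tauto
    · have : subst x W (Tm.letin z M N) = Tm.letin z (subst x W M) (subst x W N) := by
        simp [subst, h]
      rw [this]
      ext u; simp only [FV, ihM, ihN, Finset.mem_union, Finset.mem_sdiff,
        Finset.mem_singleton]; tauto
  | eq M N ihM ihN =>
    show FV (.eq _ _) = _
    ext u; simp only [FV, ihM, ihN, Finset.mem_union, Finset.mem_sdiff,
      Finset.mem_singleton]; tauto
  | unit => simp [subst, FV]
  | tt => simp [subst, FV]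
  | ff => simp [subst, FV]
  | name s => simp [subst, FV]
  | gensym => simp [subst, FV]

lemma msubst_nil (t : Tm) : msubst [] t = t := rfl

lemma msubst_cons (p : ℕ × Tm) (ξ : Model) (t : Tm) :
    msubst (p :: ξ) t = msubst ξ (subst p.1 p.2 t) := rfl

lemma msubst_append_single (ξ : Model) (p : ℕ × Tm) (t : Tm) :
    msubst (ξ ++ [p]) t = subst p.1 p.2 (msubst ξ t) := by
  simp [msubst, List.foldl_append]

lemma msubst_closed {t : Tm} (h : FV t = ∅) (ξ : Model) : msubst ξ t = t := by
  induction ξ with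
  | nil => rfl
  | cons p ξ ih =>
    rw [msubst_cons, subst_not_free (by simp [h]) _, ih]

lemma msubst_var (ξ : Model) (hcl : ∀ p ∈ ξ, FV p.2 = ∅) (y : ℕ) :
    msubst ξ (.var y) = (envLookup ξ y).getD (.var y) := by
  induction ξ with
  | nil => rfl
  | cons p ξ ih =>
    rw [msubst_cons, envLookup_cons]
    by_cases h : p.1 = y
    · rw [show subst p.1 p.2 (Tm.var y) = p.2 from by simp [subst, h.symm], if_pos h,
        Option.getD_some, msubst_closed (hcl p (by simp))]
    · have h' : ¬ (y = p.1) := fun hh => h hh.symm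
      rw [show subst p.1 p.2 (Tm.var y) = Tm.var y from by simp [subst, h'], if_neg h,
        ih (fun q hq => hcl q (by simp [hq]))]

lemma msubst_unit (ξ : Model) : msubst ξ .unit = .unit := by
  induction ξ with
  | nil => rfl
  | cons p ξ ih => rw [msubst_cons]; exact ih
lemma msubst_tt (ξ : Model) : msubst ξ .tt = .tt := by
  induction ξ with
  | nil => rfl
  | cons p ξ ih => rw [msubst_cons]; exact ih
lemma msubst_ff (ξ : Model) : msubst ξ .ff = .ff := by
  induction ξ with
  | nil => rfl
  | cons p ξ ih => rw [msubst_cons]; exact ih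
lemma msubst_gensym (ξ : Model) : msubst ξ .gensym = .gensym := by
  induction ξ with
  | nil => rfl
  | cons p ξ ih => rw [msubst_cons]; exact ih
lemma msubst_name (ξ : Model) (s : ℕ) : msubst ξ (.name s) = .name s := by
  induction ξ with
  | nil => rfl
  | cons p ξ ih => rw [msubst_cons]; exact ih

lemma msubst_app (ξ : Model) (M N : Tm) :
    msubst ξ (.app M N) = .app (msubst ξ M) (msubst ξ N) := by
  induction ξ generalizing M N with
  | nil => rfl
  | cons p ξ ih => rw [msubst_cons]; exact ih _ _
lemma msubst_pair (ξ : Model) (M N : Tm) :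
    msubst ξ (.pair M N) = .pair (msubst ξ M) (msubst ξ N) := by
  induction ξ generalizing M N with
  | nil => rfl
  | cons p ξ ih => rw [msubst_cons]; exact ih _ _
lemma msubst_eq' (ξ : Model) (M N : Tm) :
    msubst ξ (.eq M N) = .eq (msubst ξ M) (msubst ξ N) := by
  induction ξ generalizing M N with
  | nil => rfl
  | cons p ξ ih => rw [msubst_cons]; exact ih _ _
lemma msubst_fst (ξ : Model) (M : Tm) : msubst ξ (.fst M) = .fst (msubst ξ M) := by
  induction ξ generalizing M with
  | nil => rfl
  | cons p ξ ih => rw [msubst_cons]; exact ih _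
lemma msubst_snd (ξ : Model) (M : Tm) : msubst ξ (.snd M) = .snd (msubst ξ M) := by
  induction ξ generalizing M with
  | nil => rfl
  | cons p ξ ih => rw [msubst_cons]; exact ih _
lemma msubst_cond (ξ : Model) (M N₁ N₂ : Tm) :
    msubst ξ (.cond M N₁ N₂) = .cond (msubst ξ M) (msubst ξ N₁) (msubst ξ N₂) := by
  induction ξ generalizing M N₁ N₂ with
  | nil => rfl
  | cons p ξ ih => rw [msubst_cons]; exact ih _ _ _

lemma msubst_lam (ξ : Model) (x : ℕ) (α : Ty) (B : Tm) :
    msubst ξ (.lam x α B) = .lam x α (msubst (ξ.filter (fun p => !(p.1 == x))) B) := by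
  induction ξ generalizing B with
  | nil => rfl
  | cons p ξ ih =>
    rw [msubst_cons]
    by_cases h : x = p.1
    · rw [show subst p.1 p.2 (Tm.lam x α B) = Tm.lam x α B from by simp [subst, h], ih,
        show ((p :: ξ).filter (fun p => !(p.1 == x))) = ξ.filter (fun p => !(p.1 == x)) from by
          simp [List.filter_cons, h.symm]]
    · have h' : ¬ (p.1 = x) := fun hh => h hh.symm
      rw [show subst p.1 p.2 (Tm.lam x α B) = Tm.lam x α (subst p.1 p.2 B) from by
          simp [subst, h], ih,
        show ((p :: ξ).filter (fun p => !(p.1 == x))) = p :: ξ.filter (fun p => !(p.1 == x))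
          from by simp [List.filter_cons, h']]
      rfl

lemma msubst_letin (ξ : Model) (x : ℕ) (M N : Tm) :
    msubst ξ (.letin x M N) =
      .letin x (msubst ξ M) (msubst (ξ.filter (fun p => !(p.1 == x))) N) := by
  induction ξ generalizing M N with
  | nil => rfl
  | cons p ξ ih =>
    rw [msubst_cons]
    by_cases h : x = p.1
    · rw [show subst p.1 p.2 (Tm.letin x M N) = Tm.letin x (subst p.1 p.2 M) N from by
          simp [subst, h], ih,
        show ((p :: ξ).filter (fun p => !(p.1 == x))) = ξ.filter (fun p => !(p.1 == x)) from by
          simp [List.filter_cons, h.symm]]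
      rfl
    · have h' : ¬ (p.1 = x) := fun hh => h hh.symm
      rw [show subst p.1 p.2 (Tm.letin x M N) =
          Tm.letin x (subst p.1 p.2 M) (subst p.1 p.2 N) from by simp [subst, h], ih,
        show ((p :: ξ).filter (fun p => !(p.1 == x))) = p :: ξ.filter (fun p => !(p.1 == x))
          from by simp [List.filter_cons, h']]
      rfl

lemma mem_FV_msubst {ξ : Model} (hcl : ∀ p ∈ ξ, FV p.2 = ∅) {t : Tm} {y : ℕ}
    (h : y ∈ FV (msubst ξ t)) : y ∈ FV t ∧ envLookup ξ y = none := by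
  induction ξ generalizing t with
  | nil => exact ⟨h, rfl⟩
  | cons p ξ ih =>
    rw [msubst_cons] at h
    obtain ⟨h1, h2⟩ := ih (fun q hq => hcl q (by simp [hq])) h
    rw [FV_subst (hcl p (by simp)) _ _, Finset.mem_sdiff, Finset.mem_singleton] at h1
    refine ⟨h1.1, ?_⟩
    rw [envLookup_cons, if_neg (fun hh => h1.2 hh.symm), h2]
/-! Typing lemmas -/

lemma FV_typed : ∀ {Γ t γ}, Typed Γ t γ → ∀ y ∈ FV t, ∃ δ, lookupVar Γ y = some δ := by
  intro Γ t γ ht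
  induction ht with
  | var h => intro y hy; simp only [FV, Finset.mem_singleton] at hy; subst hy; exact ⟨_, h⟩
  | unit => intro y hy; simp [FV] at hy
  | tt => intro y hy; simp [FV] at hy
  | ff => intro y hy; simp [FV] at hy
  | name r => intro y hy; simp [FV] at hy
  | gensym => intro y hy; simp [FV] at hy
  | @lam Γ x α β M _ ih =>
    intro y hy
    simp only [FV, Finset.mem_sdiff, Finset.mem_singleton] at hy
    obtain ⟨δ, hδ⟩ := ih y hy.1
    rw [lookupVar_append, if_neg hy.2] at hδ
    exact ⟨δ, hδ⟩
  | app _ _ ihM ihN =>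
    intro y hy
    simp only [FV, Finset.mem_union] at hy
    rcases hy with hy | hy
    exacts [ihM y hy, ihN y hy]
  | pair _ _ ihM ihN =>
    intro y hy
    simp only [FV, Finset.mem_union] at hy
    rcases hy with hy | hy
    exacts [ihM y hy, ihN y hy]
  | fst _ ih => intro y hy; exact ih y hy
  | snd _ ih => intro y hy; exact ih y hy
  | cond _ _ _ ihM ih₁ ih₂ =>
    intro y hy
    simp only [FV, Finset.mem_union] at hy
    rcases hy with (hy | hy) | hy
    exacts [ihM y hy, ih₁ y hy, ih₂ y hy]
  | @letin Γ x M N α β _ _ ihM ihN =>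
    intro y hy
    simp only [FV, Finset.mem_union, Finset.mem_sdiff, Finset.mem_singleton] at hy
    rcases hy with hy | ⟨hy, hne⟩
    · exact ihM y hy
    · obtain ⟨δ, hδ⟩ := ihN y hy
      rw [lookupVar_append, if_neg hne] at hδ
      exact ⟨δ, hδ⟩
  | eqNm _ _ ihM ihN =>
    intro y hy
    simp only [FV, Finset.mem_union] at hy
    rcases hy with hy | hy
    exacts [ihM y hy, ihN y hy]
  | eqBool _ _ ihM ihN =>
    intro y hy
    simp only [FV, Finset.mem_union] at hy
    rcases hy with hy | hy
    exacts [ihM y hy, ihN y hy]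

lemma typed_nil_closed {t γ} (ht : Typed [] t γ) : FV t = ∅ := by
  by_contra h
  obtain ⟨y, hy⟩ := Finset.nonempty_iff_ne_empty.2 h
  obtain ⟨δ, hδ⟩ := FV_typed ht y hy
  simp [lookupVar_nil] at hδ

lemma typed_congr : ∀ {Γ t γ}, Typed Γ t γ → ∀ {Δ : Ctx},
    (∀ y ∈ FV t, lookupVar Γ y = lookupVar Δ y) → Typed Δ t γ := by
  intro Γ t γ ht
  induction ht with
  | var h =>
    intro Δ hΔ
    exact Typed.var ((hΔ _ (by simp [FV])).symm.trans h)
  | unit => intro Δ _; exact Typed.unit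
  | tt => intro Δ _; exact Typed.tt
  | ff => intro Δ _; exact Typed.ff
  | name r => intro Δ _; exact Typed.name r
  | gensym => intro Δ _; exact Typed.gensym
  | @lam Γ x α β M _ ih =>
    intro Δ hΔ
    refine Typed.lam (ih ?_)
    intro y hy
    rw [lookupVar_append, lookupVar_append]
    by_cases h : y = x
    · simp [h]
    · rw [if_neg h, if_neg h]
      exact hΔ y (by simp only [FV, Finset.mem_sdiff, Finset.mem_singleton]; exact ⟨hy, h⟩)
  | app hM hN ihM ihN =>
    intro Δ hΔ
    exact Typed.app (ihM fun y hy => hΔ y (by simp only [FV, Finset.mem_union]; left; exact hy))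
      (ihN fun y hy => hΔ y (by simp only [FV, Finset.mem_union]; right; exact hy))
  | pair hM hN ihM ihN =>
    intro Δ hΔ
    exact Typed.pair (ihM fun y hy => hΔ y (by simp only [FV, Finset.mem_union]; left; exact hy))
      (ihN fun y hy => hΔ y (by simp only [FV, Finset.mem_union]; right; exact hy))
  | fst _ ih => intro Δ hΔ; exact Typed.fst (ih hΔ)
  | snd _ ih => intro Δ hΔ; exact Typed.snd (ih hΔ)
  | cond _ _ _ ihM ih₁ ih₂ =>
    intro Δ hΔ
    refine Typed.cond (ihM fun y hy => hΔ y ?_) (ih₁ fun y hy => hΔ y ?_)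
      (ih₂ fun y hy => hΔ y ?_) <;>
      simp only [FV, Finset.mem_union] <;> tauto
  | @letin Γ x M N α β _ _ ihM ihN =>
    intro Δ hΔ
    refine Typed.letin (ihM fun y hy => hΔ y (by
      simp only [FV, Finset.mem_union]; left; exact hy)) (ihN ?_)
    intro y hy
    rw [lookupVar_append, lookupVar_append]
    by_cases h : y = x
    · simp [h]
    · rw [if_neg h, if_neg h]
      exact hΔ y (by simp only [FV, Finset.mem_union, Finset.mem_sdiff, Finset.mem_singleton]
                     right; exact ⟨hy, h⟩)
  | eqNm _ _ ihM ihN =>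
    intro Δ hΔ
    exact Typed.eqNm (ihM fun y hy => hΔ y (by simp only [FV, Finset.mem_union]; left; exact hy))
      (ihN fun y hy => hΔ y (by simp only [FV, Finset.mem_union]; right; exact hy))
  | eqBool _ _ ihM ihN =>
    intro Δ hΔ
    exact Typed.eqBool (ihM fun y hy => hΔ y (by simp only [FV, Finset.mem_union]; left; exact hy))
      (ihN fun y hy => hΔ y (by simp only [FV, Finset.mem_union]; right; exact hy))

lemma typed_weaken_nil {t γ} (ht : Typed [] t γ) (Δ : Ctx) : Typed Δ t γ := by
  refine typed_congr ht ?_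
  intro y hy
  rw [typed_nil_closed ht] at hy
  simp at hy
lemma subst_typed : ∀ {Γ B β}, Typed Γ B β → ∀ {x α W}, Typed [] W α →
    lookupVar Γ x = some α → Typed Γ (subst x W B) β := by
  intro Γ B β hB
  induction hB with
  | @var Γ y δ h =>
    intro x α W hW hx
    by_cases hyx : y = x
    · subst hyx
      rw [h] at hx
      injection hx with hx
      subst hx
      rw [show subst y W (Tm.var y) = W from by simp [subst]]
      exact typed_weaken_nil hW Γ
    · rw [show subst x W (Tm.var y) = Tm.var y from by simp [subst, hyx]]
      exact Typed.var h
  | unit => intro x α W hW hx; exact Typed.unit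
  | tt => intro x α W hW hx; exact Typed.tt
  | ff => intro x α W hW hx; exact Typed.ff
  | name r => intro x α W hW hx; exact Typed.name r
  | gensym => intro x α W hW hx; exact Typed.gensym
  | @lam Γ y δ β' M hM ih =>
    intro x α W hW hx
    by_cases hyx : y = x
    · rw [show subst x W (Tm.lam y δ M) = Tm.lam y δ M from by simp [subst, hyx]]
      exact Typed.lam hM
    · rw [show subst x W (Tm.lam y δ M) = Tm.lam y δ (subst x W M) from by simp [subst, hyx]]
      refine Typed.lam (ih hW ?_)
      rw [lookupVar_append, if_neg (fun hh => hyx hh.symm)]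
      exact hx
  | app _ _ ihM ihN =>
    intro x α W hW hx
    rw [show ∀ A B, subst x W (Tm.app A B) = Tm.app (subst x W A) (subst x W B) from
      fun _ _ => by simp [subst]]
    exact Typed.app (ihM hW hx) (ihN hW hx)
  | pair _ _ ihM ihN =>
    intro x α W hW hx
    rw [show ∀ A B, subst x W (Tm.pair A B) = Tm.pair (subst x W A) (subst x W B) from
      fun _ _ => by simp [subst]]
    exact Typed.pair (ihM hW hx) (ihN hW hx)
  | fst _ ih =>
    intro x α W hW hx
    rw [show ∀ A, subst x W (Tm.fst A) = Tm.fst (subst x W A) from fun _ => by simp [subst]]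
    exact Typed.fst (ih hW hx)
  | snd _ ih =>
    intro x α W hW hx
    rw [show ∀ A, subst x W (Tm.snd A) = Tm.snd (subst x W A) from fun _ => by simp [subst]]
    exact Typed.snd (ih hW hx)
  | cond _ _ _ ihM ih₁ ih₂ =>
    intro x α W hW hx
    rw [show ∀ A B C, subst x W (Tm.cond A B C) =
      Tm.cond (subst x W A) (subst x W B) (subst x W C) from fun _ _ _ => by simp [subst]]
    exact Typed.cond (ihM hW hx) (ih₁ hW hx) (ih₂ hW hx)
  | @letin Γ y M N δ β' hM hN ihM ihN =>
    intro x α W hW hx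
    by_cases hyx : y = x
    · rw [show subst x W (Tm.letin y M N) = Tm.letin y (subst x W M) N from by
        simp [subst, hyx]]
      exact Typed.letin (ihM hW hx) hN
    · rw [show subst x W (Tm.letin y M N) = Tm.letin y (subst x W M) (subst x W N) from by
        simp [subst, hyx]]
      refine Typed.letin (ihM hW hx) (ihN hW ?_)
      rw [lookupVar_append, if_neg (fun hh => hyx hh.symm)]
      exact hx
  | eqNm _ _ ihM ihN =>
    intro x α W hW hx
    rw [show ∀ A B, subst x W (Tm.eq A B) = Tm.eq (subst x W A) (subst x W B) from
      fun _ _ => by simp [subst]]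
    exact Typed.eqNm (ihM hW hx) (ihN hW hx)
  | eqBool _ _ ihM ihN =>
    intro x α W hW hx
    rw [show ∀ A B, subst x W (Tm.eq A B) = Tm.eq (subst x W A) (subst x W B) from
      fun _ _ => by simp [subst]]
    exact Typed.eqBool (ihM hW hx) (ihN hW hx)

lemma msubst_typed : ∀ (ξ : Model) {Γ t γ}, Typed Γ t γ →
    (∀ p ∈ ξ, FV p.2 = ∅) →
    (∀ y ∈ FV t, ∀ δ, lookupVar Γ y = some δ →
      ∃ W, envLookup ξ y = some W ∧ Typed [] W δ) →
    Typed Γ (msubst ξ t) γ := by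
  intro ξ
  induction ξ with
  | nil => intro Γ t γ ht _ _; exact ht
  | cons p ξ ih =>
    intro Γ t γ ht hcl hlk
    rw [msubst_cons]
    by_cases hx : p.1 ∈ FV t
    · obtain ⟨δ, hδ⟩ := FV_typed ht p.1 hx
      obtain ⟨W, hW, hWt⟩ := hlk p.1 hx δ hδ
      rw [envLookup_cons, if_pos rfl] at hW
      injection hW with hW
      subst hW
      refine ih (subst_typed ht hWt hδ) (fun q hq => hcl q (by simp [hq])) ?_
      intro y hy δ' hδ'
      rw [FV_subst (hcl p (by simp)) _ _, Finset.mem_sdiff, Finset.mem_singleton] at hy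
      obtain ⟨W', hW', hW't⟩ := hlk y hy.1 δ' hδ'
      rw [envLookup_cons, if_neg (fun hh => hy.2 hh.symm)] at hW'
      exact ⟨W', hW', hW't⟩
    · rw [subst_not_free hx _]
      refine ih ht (fun q hq => hcl q (by simp [hq])) ?_
      intro y hy δ' hδ'
      obtain ⟨W', hW', hW't⟩ := hlk y hy δ' hδ'
      rw [envLookup_cons, if_neg (fun hh => hx (by rw [hh]; exact hy))] at hW'
      exact ⟨W', hW', hW't⟩
/-! Evaluation lemmas -/

lemma eval_mono_s3 : ∀ {G t G' R}, Eval G t G' R → G ⊆ G' := by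
  intro G t G' R h
  induction h with
  | val _ => exact subset_rfl
  | app _ _ _ _ ih1 ih2 ih3 => exact (ih1.trans ih2).trans ih3
  | gensym r _ _ _ ih1 ih2 => exact (ih1.trans ih2).trans (Finset.subset_insert _ _)
  | pair _ _ ih1 ih2 => exact ih1.trans ih2
  | fst _ ih => exact ih
  | snd _ ih => exact ih
  | condT _ _ ih1 ih2 => exact ih1.trans ih2
  | condF _ _ ih1 ih2 => exact ih1.trans ih2
  | letin _ _ _ ih1 ih2 => exact ih1.trans ih2
  | eqT _ _ ih1 ih2 => exact ih1.trans ih2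
  | eqF _ _ _ ih1 ih2 => exact ih1.trans ih2
  | eqBoolT _ _ _ ih1 ih2 => exact ih1.trans ih2
  | eqBoolF _ _ _ ih1 ih2 => exact ih1.trans ih2

lemma eval_isValue : ∀ {G t G' R}, Eval G t G' R → IsValue R := by
  intro G t G' R h
  induction h with
  | val hv => exact hv
  | app _ _ _ _ _ _ ih3 => exact ih3
  | gensym r _ _ _ => exact IsValue.name r
  | pair _ _ ih1 ih2 => exact IsValue.pair ih1 ih2
  | fst _ ih => cases ih with | pair h1 h2 => exact h1
  | snd _ ih => cases ih with | pair h1 h2 => exact h2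
  | condT _ _ _ ih2 => exact ih2
  | condF _ _ _ ih2 => exact ih2
  | letin _ _ _ _ ih2 => exact ih2
  | eqT _ _ => exact IsValue.tt
  | eqF _ _ _ => exact IsValue.ff
  | eqBoolT _ _ _ => exact IsValue.tt
  | eqBoolF _ _ _ => exact IsValue.ff

lemma eval_value : ∀ {G W G' R}, Eval G W G' R → IsValue W → R = W ∧ G' = G := by
  intro G W G' R h
  induction h with
  | val _ => exact fun _ => ⟨rfl, rfl⟩
  | app _ _ _ _ _ _ _ => intro hv; cases hv
  | gensym r _ _ _ => intro hv; cases hv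
  | pair _ _ ih1 ih2 =>
    intro hv
    cases hv with
    | pair h1 h2 =>
      obtain ⟨e1, e2⟩ := ih1 h1
      obtain ⟨e3, e4⟩ := ih2 h2
      subst e1; subst e2; subst e3; subst e4
      exact ⟨rfl, rfl⟩
  | fst _ _ => intro hv; cases hv
  | snd _ _ => intro hv; cases hv
  | condT _ _ _ _ => intro hv; cases hv
  | condF _ _ _ _ => intro hv; cases hv
  | letin _ _ _ _ _ => intro hv; cases hv
  | eqT _ _ _ _ => intro hv; cases hv
  | eqF _ _ _ _ _ => intro hv; cases hv
  | eqBoolT _ _ _ _ _ => intro hv; cases hv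
  | eqBoolF _ _ _ _ _ => intro hv; cases hv

lemma preservation : ∀ {G t G' R}, Eval G t G' R → ∀ {γ}, Typed [] t γ → Typed [] R γ := by
  intro G t G' R h
  induction h with
  | val _ => exact fun ht => ht
  | @app G G₁ G₂ G₃ M N B V W x α _ _ hWval _ ih1 ih2 ih3 =>
    intro γ ht
    cases ht with
    | app hM hN =>
      have hlam := ih1 hM
      have hW := ih2 hN
      cases hlam with
      | lam hB =>
        have hs : Typed ([] ++ [(x, α)]) (subst x W B) γ := by
          refine subst_typed hB hW ?_
          rw [lookupVar_append]
          simp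
        refine ih3 (typed_congr hs ?_)
        intro y hy
        rw [FV_subst (typed_nil_closed hW) _ _, Finset.mem_sdiff, Finset.mem_singleton] at hy
        obtain ⟨δ, hδ⟩ := FV_typed hB y hy.1
        rw [lookupVar_append, if_neg hy.2] at hδ
        simp [lookupVar_nil] at hδ
  | @gensym G G₁ G₂ M N r _ _ _ ih1 ih2 =>
    intro γ ht
    cases ht with
    | app hM hN =>
      have := ih1 hM
      cases this
      exact Typed.name r
  | pair _ _ ih1 ih2 =>
    intro γ ht
    cases ht with
    | pair hM hN => exact Typed.pair (ih1 hM) (ih2 hN)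
  | fst _ ih =>
    intro γ ht
    cases ht with
    | fst hM =>
      have := ih hM
      cases this with
      | pair h1 h2 => exact h1
  | snd _ ih =>
    intro γ ht
    cases ht with
    | snd hM =>
      have := ih hM
      cases this with
      | pair h1 h2 => exact h2
  | condT _ _ ih1 ih2 =>
    intro γ ht
    cases ht with
    | cond hM h1 h2 => exact ih2 h1
  | condF _ _ ih1 ih2 =>
    intro γ ht
    cases ht with
    | cond hM h1 h2 => exact ih2 h2
  | @letin G G₁ G₂ M N W V x _ hWval _ ih1 ih2 =>
    intro γ ht
    cases ht with
    | @letin _ _ _ _ α _ hM hN =>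
      have hW := ih1 hM
      have hs : Typed ([] ++ [(x, α)]) (subst x W N) γ := by
        refine subst_typed hN hW ?_
        rw [lookupVar_append]
        simp
      refine ih2 (typed_congr hs ?_)
      intro y hy
      rw [FV_subst (typed_nil_closed hW) _ _, Finset.mem_sdiff, Finset.mem_singleton] at hy
      obtain ⟨δ, hδ⟩ := FV_typed hN y hy.1
      rw [lookupVar_append, if_neg hy.2] at hδ
      simp [lookupVar_nil] at hδ
  | eqT _ _ _ _ =>
    intro γ ht
    cases ht with
    | eqNm _ _ => exact Typed.tt
    | eqBool _ _ => exact Typed.tt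
  | eqF _ _ _ _ _ =>
    intro γ ht
    cases ht with
    | eqNm _ _ => exact Typed.ff
    | eqBool _ _ => exact Typed.ff
  | eqBoolT _ _ _ _ _ =>
    intro γ ht
    cases ht with
    | eqNm _ _ => exact Typed.tt
    | eqBool _ _ => exact Typed.tt
  | eqBoolF _ _ _ _ _ =>
    intro γ ht
    cases ht with
    | eqNm _ _ => exact Typed.ff
    | eqBool _ _ => exact Typed.ff
/-! The logical predicate -/

def Good (r : ℕ) : Ty → Finset ℕ → Tm → Prop
  | .unit, _, W => W = .unit
  | .bool, _, W => W = .tt ∨ W = .ff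
  | .nm, _, W => ∃ s, W = .name s ∧ s ≠ r
  | .prod a b, G, W => ∃ U U', W = .pair U U' ∧ Good r a G U ∧ Good r b G U'
  | .arrow a b, G, W => IsValue W ∧ Typed [] W (.arrow a b) ∧
      ∀ G' U, G ⊆ G' → r ∈ G' → Good r a G' U →
        ∀ G'' R, Eval G' (.app W U) G'' R → Good r b G'' R

lemma Good_isValue : ∀ {γ r G W}, Good r γ G W → IsValue W := by
  intro γ
  induction γ with
  | unit => intro r G W h; rw [h]; exact IsValue.unit
  | bool => intro r G W h; rcases h with h | h <;> rw [h]
            exacts [IsValue.tt, IsValue.ff]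
  | nm => intro r G W h; obtain ⟨s, rfl, _⟩ := h; exact IsValue.name s
  | prod a b iha ihb =>
    intro r G W h
    obtain ⟨U, U', rfl, h1, h2⟩ := h
    exact IsValue.pair (iha h1) (ihb h2)
  | arrow a b iha ihb => intro r G W h; exact h.1

lemma Good_typed : ∀ {γ r G W}, Good r γ G W → Typed [] W γ := by
  intro γ
  induction γ with
  | unit => intro r G W h; rw [h]; exact Typed.unit
  | bool => intro r G W h; rcases h with h | h <;> rw [h]
            exacts [Typed.tt, Typed.ff]
  | nm => intro r G W h; obtain ⟨s, rfl, _⟩ := h; exact Typed.name s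
  | prod a b iha ihb =>
    intro r G W h
    obtain ⟨U, U', rfl, h1, h2⟩ := h
    exact Typed.pair (iha h1) (ihb h2)
  | arrow a b iha ihb => intro r G W h; exact h.2.1

lemma Good_mono : ∀ {γ r G G' W}, G ⊆ G' → Good r γ G W → Good r γ G' W := by
  intro γ
  induction γ with
  | unit => intro r G G' W _ h; exact h
  | bool => intro r G G' W _ h; exact h
  | nm => intro r G G' W _ h; exact h
  | prod a b iha ihb =>
    intro r G G' W hs h
    obtain ⟨U, U', rfl, h1, h2⟩ := h
    exact ⟨U, U', rfl, iha hs h1, ihb hs h2⟩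
  | arrow a b iha ihb =>
    intro r G G' W hs h
    refine ⟨h.1, h.2.1, ?_⟩
    intro G₁ U hs1 hr hU G₂ R hev
    exact h.2.2 G₁ U (hs.trans hs1) hr hU G₂ R hev

/-- Good environments. -/
structure GoodEnv (r : ℕ) (G : Finset ℕ) (Γ : Ctx) (ξ : Model) : Prop where
  closed : ∀ p ∈ ξ, FV p.2 = ∅ ∧ IsValue p.2
  look : ∀ y γ, lookupVar Γ y = some γ → ∃ W, envLookup ξ y = some W ∧ Good r γ G W

lemma GoodEnv_mono {r G G' Γ ξ} (hs : G ⊆ G') (h : GoodEnv r G Γ ξ) : GoodEnv r G' Γ ξ := by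
  refine ⟨h.closed, ?_⟩
  intro y γ hy
  obtain ⟨W, hW, hG⟩ := h.look y γ hy
  exact ⟨W, hW, Good_mono hs hG⟩

lemma typed_msubst_nil {Γ t γ r G ξ} (ht : Typed Γ t γ) (henv : GoodEnv r G Γ ξ) :
    Typed [] (msubst ξ t) γ := by
  have hcl : ∀ p ∈ ξ, FV p.2 = ∅ := fun p hp => (henv.closed p hp).1
  have h1 : Typed Γ (msubst ξ t) γ := by
    refine msubst_typed ξ ht hcl ?_
    intro y hy δ hδ
    obtain ⟨W, hW, hG⟩ := henv.look y δ hδ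
    exact ⟨W, hW, Good_typed hG⟩
  refine typed_congr h1 ?_
  intro y hy
  obtain ⟨hy1, hy2⟩ := mem_FV_msubst hcl hy
  obtain ⟨δ, hδ⟩ := FV_typed ht y hy1
  obtain ⟨W, hW, _⟩ := henv.look y δ hδ
  rw [hW] at hy2
  cases hy2

/-- Closed values of base type are Good. -/
lemma base_good : ∀ {b : Ty}, BaseTy b → ∀ {R : Tm}, IsValue R → Typed [] R b →
    ∀ {r : ℕ} {G : Finset ℕ}, Good r b G R := by
  intro b hb
  induction hb with
  | unit =>
    intro R hR hty r G
    cases hR with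
    | var x => cases hty with | var h => simp [lookupVar_nil] at h
    | unit => rfl
    | tt => cases hty
    | ff => cases hty
    | name s => cases hty
    | gensym => cases hty
    | lam x α M => cases hty
    | pair hV hW => cases hty
  | bool =>
    intro R hR hty r G
    cases hR with
    | var x => cases hty with | var h => simp [lookupVar_nil] at h
    | unit => cases hty
    | tt => exact Or.inl rfl
    | ff => exact Or.inr rfl
    | name s => cases hty
    | gensym => cases hty
    | lam x α M => cases hty
    | pair hV hW => cases hty
  | prod hba hbb iha ihb =>
    intro R hR hty r G
    cases hR with
    | var x => cases hty with | var h => simp [lookupVar_nil] at h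
    | unit => cases hty
    | tt => cases hty
    | ff => cases hty
    | name s => cases hty
    | gensym => cases hty
    | lam x α M => cases hty
    | pair hV hW =>
      cases hty with
      | pair h1 h2 => exact ⟨_, _, rfl, iha hV h1, ihb hW h2⟩

/-- The hidden-name function value is Good. -/
lemma V_good {a b : Ty} (hb : BaseTy b) {V : Tm} (hV : IsValue V)
    (hty : Typed [] V (.arrow a b)) (r : ℕ) (G : Finset ℕ) : Good r (.arrow a b) G V := by
  refine ⟨hV, hty, ?_⟩
  intro G' U _ _ hU G'' R hev
  exact base_good hb (eval_isValue hev) (preservation hev (Typed.app hty (Good_typed hU)))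
lemma msubst_snoc (ξ : Model) (x : ℕ) (U : Tm) (t : Tm) :
    msubst (ξ ++ [(x, U)]) t = subst x U (msubst ξ t) := by
  simp [msubst, List.foldl_append]

lemma GoodEnv_snoc {r G Γ ξ x α U} (henv : GoodEnv r G Γ ξ) (hU : Good r α G U) :
    GoodEnv r G (Γ ++ [(x, α)]) (ξ.filter (fun p => !(p.1 == x)) ++ [(x, U)]) := by
  constructor
  · intro p hp
    rcases List.mem_append.mp hp with hp | hp
    · exact henv.closed p (List.mem_of_mem_filter hp)
    · simp only [List.mem_singleton] at hp; subst hp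
      exact ⟨typed_nil_closed (Good_typed hU), Good_isValue hU⟩
  · intro y γ hy
    rw [lookupVar_append] at hy
    rw [envLookup_filter_append]
    by_cases h : y = x
    · rw [if_pos h] at hy ⊢
      injection hy with hy; subst hy
      exact ⟨U, rfl, hU⟩
    · rw [if_neg h] at hy ⊢
      exact henv.look y γ hy

/-- The fundamental lemma: evaluating a name-free term closed by a good
environment yields a good value. -/
theorem fund : ∀ {Γ t γ}, Typed Γ t γ → ∀ {r G ξ G' R}, AN t = ∅ →
    GoodEnv r G Γ ξ → r ∈ G → Eval G (msubst ξ t) G' R → Good r γ G' R := by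
  intro Γ t γ ht
  induction ht with
  | @var Γ y δ h =>
    intro r G ξ G' R hAN henv hr hev
    obtain ⟨W, hW, hG⟩ := henv.look _ _ h
    rw [msubst_var ξ (fun p hp => (henv.closed p hp).1) _, hW,
      Option.getD_some] at hev
    obtain ⟨rfl, rfl⟩ := eval_value hev (Good_isValue hG)
    exact hG
  | unit =>
    intro r G ξ G' R hAN henv hr hev
    rw [msubst_unit] at hev
    obtain ⟨rfl, rfl⟩ := eval_value hev IsValue.unit
    exact rfl
  | tt =>
    intro r G ξ G' R hAN henv hr hev
    rw [msubst_tt] at hev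
    obtain ⟨rfl, rfl⟩ := eval_value hev IsValue.tt
    exact Or.inl rfl
  | ff =>
    intro r G ξ G' R hAN henv hr hev
    rw [msubst_ff] at hev
    obtain ⟨rfl, rfl⟩ := eval_value hev IsValue.ff
    exact Or.inr rfl
  | name s =>
    intro r G ξ G' R hAN henv hr hev
    simp [AN] at hAN
  | gensym =>
    intro r G ξ G' R hAN henv hr hev
    rw [msubst_gensym] at hev
    obtain ⟨rfl, rfl⟩ := eval_value hev IsValue.gensym
    refine ⟨IsValue.gensym, Typed.gensym, ?_⟩
    intro G₁ U hs hr1 hU G₂ R' hev'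
    cases hev' with
    | val hv => cases hv
    | app h1 h2 hWv h3 =>
      obtain ⟨he, _⟩ := eval_value h1 IsValue.gensym
      simp at he
    | gensym r' h1 h2 hr' =>
      have hU' : U = Tm.unit := hU
      subst hU'
      obtain ⟨_, rfl⟩ := eval_value h1 IsValue.gensym
      obtain ⟨_, rfl⟩ := eval_value h2 IsValue.unit
      exact ⟨r', rfl, fun e => hr' (e ▸ hr1)⟩
  | @lam Γ x α β M hM ih =>
    intro r G ξ G' R hAN henv hr hev
    rw [msubst_lam] at hev
    obtain ⟨rfl, rfl⟩ := eval_value hev (IsValue.lam _ _ _)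
    refine ⟨IsValue.lam _ _ _, ?_, ?_⟩
    · have := typed_msubst_nil (Typed.lam hM) henv
      rwa [msubst_lam] at this
    · intro G₁ U hs hr1 hU G₂ R' hev'
      cases hev' with
      | val hv => cases hv
      | app h1 h2 hWv h3 =>
        obtain ⟨he, rfl⟩ := eval_value h1 (IsValue.lam _ _ _)
        injection he with e1 e2 e3
        subst e1; subst e2; subst e3
        obtain ⟨rfl, rfl⟩ := eval_value h2 (Good_isValue hU)
        rw [← msubst_snoc] at h3
        exact ih hAN (GoodEnv_snoc (GoodEnv_mono hs henv) hU) hr1 h3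
      | gensym r' h1 h2 hr' =>
        obtain ⟨he, _⟩ := eval_value h1 (IsValue.lam _ _ _)
        simp at he
  | @app Γ M N α β hM hN ihM ihN =>
    intro r G ξ G' R hAN henv hr hev
    rw [show AN (Tm.app M N) = AN M ∪ AN N from rfl] at hAN
    obtain ⟨hANM, hANN⟩ := Finset.union_eq_empty.mp hAN
    rw [msubst_app] at hev
    cases hev with
    | val hv => cases hv
    | app h1 h2 hWv h3 =>
      have hGM := ihM hANM henv hr h1
      have hGN := ihN hANN (GoodEnv_mono (eval_mono_s3 h1) henv) (eval_mono_s3 h1 hr) h2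
      refine hGM.2.2 _ _ (eval_mono_s3 h2) (eval_mono_s3 h2 (eval_mono_s3 h1 hr)) hGN _ _ ?_
      exact Eval.app (Eval.val (IsValue.lam _ _ _)) (Eval.val hWv) hWv h3
    | gensym r' h1 h2 hr' =>
      have hGM := ihM hANM henv hr h1
      have hty := hGM.2.1
      cases hty
      exact ⟨r', rfl, fun e => hr' (e ▸ ((eval_mono_s3 h2) ((eval_mono_s3 h1) hr)))⟩
  | @pair Γ M N α β hM hN ihM ihN =>
    intro r G ξ G' R hAN henv hr hev
    rw [show AN (Tm.pair M N) = AN M ∪ AN N from rfl] at hAN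
    obtain ⟨hANM, hANN⟩ := Finset.union_eq_empty.mp hAN
    rw [msubst_pair] at hev
    cases hev with
    | val hv =>
      cases hv with
      | pair h1 h2 =>
        exact ⟨_, _, rfl, ihM hANM henv hr (Eval.val h1), ihN hANN henv hr (Eval.val h2)⟩
    | pair h1 h2 =>
      exact ⟨_, _, rfl, Good_mono (eval_mono_s3 h2) (ihM hANM henv hr h1),
        ihN hANN (GoodEnv_mono (eval_mono_s3 h1) henv) (eval_mono_s3 h1 hr) h2⟩
  | @fst Γ M α β hM ih =>
    intro r G ξ G' R hAN henv hr hev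
    rw [msubst_fst] at hev
    cases hev with
    | val hv => cases hv
    | fst h1 =>
      have hG := ih hAN henv hr h1
      obtain ⟨U, U', he, g1, g2⟩ := hG
      injection he with e1 e2
      subst e1; subst e2
      exact g1
  | @snd Γ M α β hM ih =>
    intro r G ξ G' R hAN henv hr hev
    rw [msubst_snd] at hev
    cases hev with
    | val hv => cases hv
    | snd h1 =>
      have hG := ih hAN henv hr h1
      obtain ⟨U, U', he, g1, g2⟩ := hG
      injection he with e1 e2
      subst e1; subst e2
      exact g2
  | @cond Γ M N₁ N₂ α hM h₁ h₂ ihM ih₁ ih₂ =>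
    intro r G ξ G' R hAN henv hr hev
    rw [show AN (Tm.cond M N₁ N₂) = AN M ∪ AN N₁ ∪ AN N₂ from rfl] at hAN
    obtain ⟨hAN', hAN₂⟩ := Finset.union_eq_empty.mp hAN
    obtain ⟨hANM, hAN₁⟩ := Finset.union_eq_empty.mp hAN'
    rw [msubst_cond] at hev
    cases hev with
    | val hv => cases hv
    | condT hc h1 => exact ih₁ hAN₁ (GoodEnv_mono (eval_mono_s3 hc) henv) (eval_mono_s3 hc hr) h1
    | condF hc h1 => exact ih₂ hAN₂ (GoodEnv_mono (eval_mono_s3 hc) henv) (eval_mono_s3 hc hr) h1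
  | @letin Γ x M N α β hM hN ihM ihN =>
    intro r G ξ G' R hAN henv hr hev
    rw [show AN (Tm.letin x M N) = AN M ∪ AN N from rfl] at hAN
    obtain ⟨hANM, hANN⟩ := Finset.union_eq_empty.mp hAN
    rw [msubst_letin] at hev
    cases hev with
    | val hv => cases hv
    | letin h1 hWv h2 =>
      have hGW := ihM hANM henv hr h1
      rw [← msubst_snoc] at h2
      exact ihN hANN (GoodEnv_snoc (GoodEnv_mono (eval_mono_s3 h1) henv) hGW)
        (eval_mono_s3 h1 hr) h2
  | @eqNm Γ M N hM hN ihM ihN =>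
    intro r G ξ G' R hAN henv hr hev
    rw [msubst_eq'] at hev
    cases hev with
    | val hv => cases hv
    | eqT h1 h2 => exact Or.inl rfl
    | eqF h1 h2 hne => exact Or.inr rfl
    | eqBoolT h1 h2 hb => exact Or.inl rfl
    | eqBoolF h1 h2 hb => exact Or.inr rfl
  | @eqBool Γ M N hM hN ihM ihN =>
    intro r G ξ G' R hAN henv hr hev
    rw [msubst_eq'] at hev
    cases hev with
    | val hv => cases hv
    | eqT h1 h2 => exact Or.inl rfl
    | eqF h1 h2 hne => exact Or.inr rfl
    | eqBoolT h1 h2 hb => exact Or.inl rfl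
    | eqBoolF h1 h2 hb => exact Or.inr rfl
/-- A name-free term applied to a function value of base-result type
cannot reveal a name hidden inside that function. -/
theorem base_result_functions_cannot_reveal_their_names :
    ∀ (a b : Ty) (f : ℕ) (M V : Tm) (r : ℕ) (G : Finset ℕ),
      BaseTy b → AN M = ∅ → r ∉ AN M →
      Typed [(f, Ty.arrow a b)] M Ty.nm →
      IsValue V → Typed [] V (Ty.arrow a b) → r ∈ AN V →
      AN M ∪ AN V ⊆ G →
      ¬ ∃ G' : Finset ℕ, Eval G (subst f V M) G' (Tm.name r) := by
  intro a b f M V r G hb hAN _ hM hV hVty hrV hG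
  rintro ⟨G', hev⟩
  have hrG : r ∈ G := hG (Finset.mem_union_right _ hrV)
  have henv : GoodEnv r G [(f, Ty.arrow a b)] [(f, V)] := by
    constructor
    · intro p hp
      simp only [List.mem_singleton] at hp; subst hp
      exact ⟨typed_nil_closed hVty, hV⟩
    · intro y γ hy
      have : lookupVar ([] ++ [(f, Ty.arrow a b)]) y = some γ := hy
      rw [lookupVar_append] at this
      by_cases h : y = f
      · rw [if_pos h] at this
        injection this with this
        subst this; subst h
        exact ⟨V, by rw [envLookup_cons]; simp, V_good hb hV hVty r G⟩
      · rw [if_neg h, lookupVar_nil] at this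
        cases this
  have hmev : Eval G (msubst [(f, V)] M) G' (Tm.name r) := by
    rw [show msubst [(f, V)] M = subst f V M from rfl]
    exact hev
  obtain ⟨s, hs, hne⟩ := fund hM hAN henv hrG hmev
  injection hs with hs
  exact hne hs.symm
end

section
/- Evaluation of name-free terms is invariant under model extension: if ξ ⪯* ξ′ (ξ′ is an extension of ξ obtained by adding values derivable from the current model), Γ₀ is a sub-context of the context typing ξ, M is a name-free term typed in Γ₀, and the names of V shared with ξ′ are already in ξ, then M derives V from Γ₀ in ξ if and only if M derives V from Γ₀ in ξ′. -/
/-!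
Since `ξ'` only appends bindings to `ξ` and `Mξ` is closed, `Mξ' = Mξ`, and the names of the
model can only grow; so the claim compares runs of one closed term `N` from two sets of used
names `G ⊆ G'`, both containing the names of `N`. Evaluation consults the initial set only when
`gensym` picks a fresh name, so a run from `G` can be replayed from any set avoiding the names it
generated. This turns a run from `G'` directly into one from `G`. Conversely, a run from `G` may
generate names of `G' \ G`; evaluation is equivariant under injective renamings of names, and a
renaming that fixes `G ∪ AN V` and sends every other name outside `G'` removes them. The side
condition `AN V ∩ G' ⊆ G` ensures that the names of `V`, which the renaming must fix, are not
among them.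
-/

lemma subst_of_notMem_FV {x : ℕ} (V : Tm) {M : Tm} (h : x ∉ FV M) : subst x V M = M := by
  induction M <;> grind [FV, subst]

lemma FV_subst_subset (x : ℕ) (V M : Tm) : FV (subst x V M) ⊆ FV M \ {x} ∪ FV V := by
  induction M <;> grind [FV, subst]

lemma AN_subst_subset (x : ℕ) (V M : Tm) : AN (subst x V M) ⊆ AN M ∪ AN V := by
  induction M <;> grind [AN, subst]

lemma mem_of_lookupVar_eq_some {Γ : Ctx} {x : ℕ} {α : Ty} (h : lookupVar Γ x = some α) :
    (x, α) ∈ Γ := by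
  obtain ⟨p, hp, rfl⟩ := Option.map_eq_some_iff.mp h
  have hx := List.find?_some hp
  simp only [beq_iff_eq] at hx
  simpa [← hx] using List.mem_reverse.mp (List.mem_of_find?_eq_some hp)

lemma FV_subset_of_typed {Γ : Ctx} {M : Tm} {α : Ty} (h : Typed Γ M α) :
    FV M ⊆ (Γ.map Prod.fst).toFinset := by
  induction h with
  | var h => simpa [FV] using ⟨_, mem_of_lookupVar_eq_some h⟩
  | lam _ ih => grind [FV, List.mem_toFinset]
  | letin _ _ ih₁ ih₂ => exact Finset.union_subset ih₁ (by grind [List.mem_toFinset])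
  | _ => simp_all [FV, Finset.union_subset_iff]

lemma msubst_append (ξ₁ ξ₂ : Model) (M : Tm) :
    msubst (ξ₁ ++ ξ₂) M = msubst ξ₂ (msubst ξ₁ M) :=
  List.foldl_append ..

lemma msubst_of_FV_eq_empty (ξ : Model) {M : Tm} (h : FV M = ∅) : msubst ξ M = M := by
  induction ξ with
  | nil => rfl
  | cons p ξ ih => simpa [msubst, subst_of_notMem_FV, h] using ih

lemma ANModel_append (ξ₁ ξ₂ : Model) : ANModel (ξ₁ ++ ξ₂) = ANModel ξ₁ ∪ ANModel ξ₂ := by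
  induction ξ₁ with
  | nil => simp [ANModel]
  | cons p ξ ih => simp_all [ANModel, Finset.union_assoc]

lemma AN_msubst_subset (ξ : Model) (M : Tm) : AN (msubst ξ M) ⊆ AN M ∪ ANModel ξ := by
  induction ξ generalizing M with
  | nil => simp [msubst]
  | cons p ξ ih =>
    have := (ih (subst p.1 p.2 M)).trans (Finset.union_subset_union_left (AN_subst_subset ..))
    simpa [msubst, ANModel, Finset.union_assoc] using this

lemma FV_msubst_eq_empty {Γ : Ctx} {ξ : Model} (hξ : ModelTyped Γ ξ) {M : Tm}
    (hM : FV M ⊆ (Γ.map Prod.fst).toFinset) : FV (msubst ξ M) = ∅ := by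
  induction hξ generalizing M with
  | nil => simpa [msubst] using hM
  | @cons Γ ξ x α V _ hV _ ih =>
    have hVc : FV V = ∅ := by simpa using FV_subset_of_typed hV
    exact ih ((FV_subst_subset x V M).trans (by grind [List.mem_toFinset]))

lemma ModelExt.exists_append {p q : Ctx × Model} (h : ModelExt p q) : ∃ η, q.2 = p.2 ++ η := by
  induction h with
  | refl => exact ⟨[], by simp⟩
  | tail _ hstep ih =>
    obtain ⟨η, hη⟩ := ih
    obtain ⟨y, -, -, V, -, -, hq, -⟩ := hstep
    exact ⟨η ++ [(y, V)], by rw [hq, hη, List.append_assoc]⟩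

lemma Eval.subset {G G' : Finset ℕ} {M V : Tm} (h : Eval G M G' V) : G ⊆ G' := by
  induction h <;> grind

lemma sdiff_seq_split {G G₁ G₂ G₀ : Finset ℕ} (h₁ : G ⊆ G₁) (h₂ : G₁ ⊆ G₂)
    (hd : Disjoint (G₂ \ G) G₀) :
    Disjoint (G₁ \ G) G₀ ∧ Disjoint (G₂ \ G₁) (G₀ ∪ G₁ \ G) ∧
      G₀ ∪ G₁ \ G ∪ G₂ \ G₁ = G₀ ∪ G₂ \ G := by
  simp only [Finset.disjoint_left] at hd ⊢
  refine ⟨?_, ?_, ?_⟩ <;> grind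

lemma Eval.rebase {G Gf : Finset ℕ} {M V : Tm} (h : Eval G M Gf V) {G₀ : Finset ℕ}
    (hd : Disjoint (Gf \ G) G₀) : Eval G₀ M (G₀ ∪ Gf \ G) V := by
  induction h generalizing G₀ with
  | val hV => simpa using Eval.val hV
  | app e₁ e₂ hW e₃ ih₁ ih₂ ih₃ =>
    obtain ⟨hd₁₂, hd₃, hG₃⟩ := sdiff_seq_split (e₁.subset.trans e₂.subset) e₃.subset hd
    obtain ⟨hd₁, hd₂, hG₂⟩ := sdiff_seq_split e₁.subset e₂.subset hd₁₂
    exact hG₃ ▸ .app (ih₁ hd₁) (hG₂ ▸ ih₂ hd₂) hW (ih₃ hd₃)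
  | @gensym G G₁ G₂ M N r e₁ e₂ hr ih₁ ih₂ =>
    have hrG₁ : r ∉ G₁ := fun h => hr (e₂.subset h)
    have hrG : r ∉ G := fun h => hrG₁ (e₁.subset h)
    have hrG₀ : r ∉ G₀ := Finset.disjoint_left.mp hd (by simp [hrG])
    obtain ⟨hd₁, hd₂, hG₂⟩ := sdiff_seq_split e₁.subset e₂.subset
      (hd.mono_left (Finset.sdiff_subset_sdiff (Finset.subset_insert r G₂) le_rfl))
    have := Eval.gensym r (ih₁ hd₁) (ih₂ hd₂) (by simp [hrG₀, hrG₁, hr])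
    rwa [hG₂, ← Finset.union_insert, ← Finset.insert_sdiff_of_notMem _ hrG] at this
  | pair e₁ e₂ ih₁ ih₂ =>
    obtain ⟨hd₁, hd₂, hG⟩ := sdiff_seq_split e₁.subset e₂.subset hd
    exact hG ▸ .pair (ih₁ hd₁) (ih₂ hd₂)
  | fst _ ih => exact .fst (ih hd)
  | snd _ ih => exact .snd (ih hd)
  | condT e₁ e₂ ih₁ ih₂ =>
    obtain ⟨hd₁, hd₂, hG⟩ := sdiff_seq_split e₁.subset e₂.subset hd
    exact hG ▸ .condT (ih₁ hd₁) (ih₂ hd₂)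
  | condF e₁ e₂ ih₁ ih₂ =>
    obtain ⟨hd₁, hd₂, hG⟩ := sdiff_seq_split e₁.subset e₂.subset hd
    exact hG ▸ .condF (ih₁ hd₁) (ih₂ hd₂)
  | letin e₁ hW e₂ ih₁ ih₂ =>
    obtain ⟨hd₁, hd₂, hG⟩ := sdiff_seq_split e₁.subset e₂.subset hd
    exact hG ▸ .letin (ih₁ hd₁) hW (ih₂ hd₂)
  | eqT e₁ e₂ ih₁ ih₂ =>
    obtain ⟨hd₁, hd₂, hG⟩ := sdiff_seq_split e₁.subset e₂.subset hd
    exact hG ▸ .eqT (ih₁ hd₁) (ih₂ hd₂)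
  | eqF e₁ e₂ hne ih₁ ih₂ =>
    obtain ⟨hd₁, hd₂, hG⟩ := sdiff_seq_split e₁.subset e₂.subset hd
    exact hG ▸ .eqF (ih₁ hd₁) (ih₂ hd₂) hne
  | eqBoolT e₁ e₂ hb ih₁ ih₂ =>
    obtain ⟨hd₁, hd₂, hG⟩ := sdiff_seq_split e₁.subset e₂.subset hd
    exact hG ▸ .eqBoolT (ih₁ hd₁) (ih₂ hd₂) hb
  | eqBoolF e₁ e₂ hb ih₁ ih₂ =>
    obtain ⟨hd₁, hd₂, hG⟩ := sdiff_seq_split e₁.subset e₂.subset hd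
    exact hG ▸ .eqBoolF (ih₁ hd₁) (ih₂ hd₂) hb

def Tm.mapNames (π : ℕ → ℕ) : Tm → Tm
  | .name r => .name (π r)
  | .lam x α M => .lam x α (M.mapNames π)
  | .app M N => .app (M.mapNames π) (N.mapNames π)
  | .pair M N => .pair (M.mapNames π) (N.mapNames π)
  | .fst M => .fst (M.mapNames π)
  | .snd M => .snd (M.mapNames π)
  | .cond M N₁ N₂ => .cond (M.mapNames π) (N₁.mapNames π) (N₂.mapNames π)
  | .letin x M N => .letin x (M.mapNames π) (N.mapNames π)
  | .eq M N => .eq (M.mapNames π) (N.mapNames π)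
  | M => M

lemma Tm.mapNames_subst (π : ℕ → ℕ) (x : ℕ) (W B : Tm) :
    (subst x W B).mapNames π = subst x (W.mapNames π) (B.mapNames π) := by
  induction B <;> grind [Tm.mapNames, subst]

lemma Tm.mapNames_eq_self {π : ℕ → ℕ} {M : Tm} (h : ∀ r ∈ AN M, π r = r) :
    M.mapNames π = M := by
  induction M <;> simp_all [Tm.mapNames, AN]

lemma IsValue.mapNames (π : ℕ → ℕ) {V : Tm} (h : IsValue V) : IsValue (V.mapNames π) := by
  induction h with
  | pair _ _ ih₁ ih₂ => exact .pair ih₁ ih₂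
  | _ => constructor

lemma Eval.mapNames {π : ℕ → ℕ} (hπ : π.Injective) {G Gf : Finset ℕ} {M V : Tm}
    (h : Eval G M Gf V) : Eval (G.image π) (M.mapNames π) (Gf.image π) (V.mapNames π) := by
  induction h with
  | val hV => exact .val (hV.mapNames π)
  | app _ _ hW _ ih₁ ih₂ ih₃ =>
    rw [Tm.mapNames_subst] at ih₃
    exact .app ih₁ ih₂ (hW.mapNames π) ih₃
  | gensym r _ _ hr ih₁ ih₂ =>
    rw [Finset.image_insert]
    exact .gensym (π r) ih₁ ih₂ (by rwa [hπ.mem_finset_image])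
  | pair _ _ ih₁ ih₂ => exact .pair ih₁ ih₂
  | fst _ ih => exact .fst ih
  | snd _ ih => exact .snd ih
  | condT _ _ ih₁ ih₂ => exact .condT ih₁ ih₂
  | condF _ _ ih₁ ih₂ => exact .condF ih₁ ih₂
  | letin _ hW _ ih₁ ih₂ =>
    rw [Tm.mapNames_subst] at ih₂
    exact .letin ih₁ (hW.mapNames π) ih₂
  | eqT _ _ ih₁ ih₂ => exact .eqT ih₁ ih₂
  | eqF _ _ hne ih₁ ih₂ => exact .eqF ih₁ ih₂ (hπ.ne hne)
  | eqBoolT _ _ hb ih₁ ih₂ =>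
    exact .eqBoolT ih₁ ih₂ (by rcases hb with rfl | rfl <;> simp [Tm.mapNames])
  | eqBoolF _ _ hb ih₁ ih₂ =>
    exact .eqBoolF ih₁ ih₂ (by rcases hb with ⟨rfl, rfl⟩ | ⟨rfl, rfl⟩ <;> simp [Tm.mapNames])

lemma exists_injective_fix_and_avoid (A B : Finset ℕ) :
    ∃ π : ℕ → ℕ, π.Injective ∧ (∀ r ∈ A, π r = r) ∧ ∀ r ∉ A, π r ∉ B := by
  obtain ⟨k, hk⟩ := (A ∪ B).exists_nat_subset_range
  have hk' : ∀ r ∈ A ∪ B, r < k := fun r hr => Finset.mem_range.1 (hk hr)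
  refine ⟨fun r => if r ∈ A then r else r + k, fun r s h => ?_, fun r hr => if_pos hr,
    fun r hr hB => ?_⟩
  · have := hk' r
    have := hk' s
    simp only [Finset.mem_union] at *
    split_ifs at h <;> grind
  · have := hk' _ (Finset.mem_union_right _ hB)
    simp [hr] at this

theorem exists_eval_iff_of_subset {G G' : Finset ℕ} {N V : Tm} (hN : AN N ⊆ G) (hG : G ⊆ G')
    (hV : AN V ∩ G' ⊆ G) : (∃ Gf, Eval G N Gf V) ↔ ∃ Gf, Eval G' N Gf V := by
  refine ⟨fun ⟨_, h⟩ => ?_, fun ⟨_, h⟩ => ⟨_, h.rebase (Finset.sdiff_disjoint.mono_right hG)⟩⟩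
  obtain ⟨π, hπ, hfix, hmove⟩ := exists_injective_fix_and_avoid (G ∪ AN V) G'
  have hGfix : G.image π = G :=
    (Finset.image_congr fun r hr => hfix r (Finset.mem_union_left _ hr)).trans Finset.image_id
  have hNfix : N.mapNames π = N :=
    Tm.mapNames_eq_self fun r hr => hfix r (Finset.mem_union_left _ (hN hr))
  have hVfix : V.mapNames π = V :=
    Tm.mapNames_eq_self fun r hr => hfix r (Finset.mem_union_right _ hr)
  have h' := h.mapNames hπ
  rw [hGfix, hNfix, hVfix] at h'
  refine ⟨_, h'.rebase (Finset.disjoint_left.2 ?_)⟩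
  simp only [Finset.mem_sdiff, Finset.mem_image]
  rintro _ ⟨⟨r, -, rfl⟩, hrG⟩ hrG'
  by_cases hrA : r ∈ G ∪ AN V
  · rw [hfix r hrA] at hrG hrG'
    exact hrG (hV (Finset.mem_inter.2 ⟨(Finset.mem_union.1 hrA).resolve_left hrG, hrG'⟩))
  · exact hmove r hrA hrG'

/-- Evaluation (derivation of a value by a name-free term over a
sub-context) is invariant under model extension, provided the names of `V` shared
with the extended model are already in the original one. -/
theorem derivation_invariant_under_model_extension :
    ∀ (Γ Γ' Γ₀ : Ctx) (ξ ξ' : Model) (M V : Tm),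
      ModelTyped Γ ξ → ModelExt (Γ, ξ) (Γ', ξ') → Γ₀.Sublist Γ →
      AN M = ∅ → (∃ α, Typed Γ₀ M α) →
      (AN V ∩ ANModel ξ' ⊆ ANModel ξ) →
      ((∃ G', Eval (ANModel ξ) (msubst ξ M) G' V) ↔
       (∃ G', Eval (ANModel ξ') (msubst ξ' M) G' V)) := by
  intro Γ Γ' Γ₀ ξ ξ' M V hξ hext hΓ₀ hM ⟨α, hMα⟩ hV
  obtain ⟨η, rfl⟩ := hext.exists_append
  have hdom : (Γ₀.map Prod.fst).toFinset ⊆ (Γ.map Prod.fst).toFinset := fun x hx =>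
    List.mem_toFinset.2 ((hΓ₀.map Prod.fst).subset (List.mem_toFinset.1 hx))
  have hclosed : FV (msubst ξ M) = ∅ := FV_msubst_eq_empty hξ ((FV_subset_of_typed hMα).trans hdom)
  rw [msubst_append, msubst_of_FV_eq_empty η hclosed]
  rw [ANModel_append] at hV ⊢
  refine exists_eval_iff_of_subset ?_ Finset.subset_union_left hV
  simpa [hM] using AN_msubst_subset ξ M
end
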